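/- Let N ≥ 3, let ν ≥ 1 be an integer, and let f : ℝ^N → ℝ be a smooth scalar field such that lim_{R→∞} R^{N−2} ∫_{S^{N-1}} f(Rσ)² dσ = 0 and such that the integrals ∫_{ℝ^N}(∂_r f)² dx and ∫_{ℝ^N} |x|^{−2} f² dx are finite. Then ∫_{ℝ^N} (∂_r(|x|^{−ν} f))² |x|^{2ν} dx = ∫_{ℝ^N} ((∂_r f)² + ν(ν+N−2)|x|^{−2} f²) dx, where ∂_r g(x) = (x/|x|)·∇g(x) denotes the radial derivative. -/

import Mathlib

open MeasureTheory Metric Filter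

noncomputable section

/-- `|∇f|² = Σ_k (∂f/∂x_k)²` for a scalar field on `ℝ^N`. -/
def gradSqS {N : ℕ} (f : EuclideanSpace ℝ (Fin N) → ℝ)
    (x : EuclideanSpace ℝ (Fin N)) : ℝ :=
  ∑ k, (fderiv ℝ f x (EuclideanSpace.single k 1)) ^ 2

/-- The standard surface measure on the unit sphere `S^{N-1} ⊂ ℝ^N`. -/
def sphereMeasure (N : ℕ) : Measure (sphere (0 : EuclideanSpace ℝ (Fin N)) 1) :=
  (volume : Measure (EuclideanSpace ℝ (Fin N))).toSphere

/-- The radial derivative `∂_r f(x) = (x/|x|)·∇f(x)`. -/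
def radDeriv {N : ℕ} (f : EuclideanSpace ℝ (Fin N) → ℝ)
    (x : EuclideanSpace ℝ (Fin N)) : ℝ :=
  fderiv ℝ f x (‖x‖⁻¹ • x)

/-!
Along the ray through `x`, `∂_r(|x|^{-ν} f) |x|^ν = ∂_r f - ν f / |x|`, so after expanding the
square it remains to show `2 ∫ f ∂_r f / |x| = -(N - 2) ∫ f² / |x|²`. In polar coordinates, with
`F(r) = ∫_{S^{N-1}} f(rσ)² dσ`, the left side is `∫₀^∞ r^{N-2} F'(r) dr` and the right side is
`-(N - 2) ∫₀^∞ r^{N-3} F(r) dr`. Their difference is `∫₀^∞ (r^{N-2} F(r))' dr`, which vanishes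
because `r^{N-2} F(r)` is `0` at `r = 0` (as `N ≥ 3`) and tends to `0` as `r → ∞` by hypothesis.
-/

open Set Function Topology

namespace MeasureTheory

theorem integral_volumeIoiPow (n : ℕ) (h : ℝ → ℝ) :
    ∫ r, h r ∂Measure.volumeIoiPow n = ∫ r in Ioi 0, r ^ n * h r := by
  simp only [Measure.volumeIoiPow, ENNReal.ofReal]
  rw [integral_withDensity_eq_integral_smul (measurable_subtype_coe.pow_const _).real_toNNReal,
    integral_subtype_comap measurableSet_Ioi fun r ↦ (r ^ n).toNNReal • h r]
  refine setIntegral_congr_fun measurableSet_Ioi fun r hr ↦ ?_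
  rw [NNReal.smul_def, Real.coe_toNNReal _ (pow_nonneg (le_of_lt hr) _), smul_eq_mul]

theorem integrable_volumeIoiPow_iff (n : ℕ) (h : ℝ → ℝ) :
    Integrable (fun r : Ioi (0 : ℝ) ↦ h r) (Measure.volumeIoiPow n) ↔
      IntegrableOn (fun r ↦ r ^ n * h r) (Ioi 0) := by
  rw [Measure.volumeIoiPow, integrable_withDensity_iff_integrable_smul' (by fun_prop)
    (ae_of_all _ fun _ ↦ ENNReal.ofReal_lt_top),
    integrableOn_iff_comap_subtypeVal measurableSet_Ioi]
  refine integrable_congr (ae_of_all _ fun r ↦ ?_)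
  simp [ENNReal.toReal_ofReal (pow_nonneg (le_of_lt r.2) n)]

section PolarCoordinates

variable {E : Type*} [NormedAddCommGroup E] [NormedSpace ℝ E]

theorem homeomorphUnitSphereProd_smul (x : ({0}ᶜ : Set E)) :
    ((homeomorphUnitSphereProd E x).2 : ℝ) • ((homeomorphUnitSphereProd E x).1 : E) = x := by
  simp [smul_inv_smul₀ (norm_ne_zero_iff.2 x.2)]

theorem norm_smul_of_norm_eq_one {t : ℝ} (ht : 0 ≤ t) {v : E} (hv : ‖v‖ = 1) :
    ‖t • v‖ = t := by
  rw [norm_smul, hv, Real.norm_of_nonneg ht, mul_one]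

variable [MeasurableSpace E] [BorelSpace E] [FiniteDimensional ℝ E] [Nontrivial E]
  (μ : Measure E) [μ.IsAddHaarMeasure]

theorem integral_eq_integral_toSphere_prod (g : E → ℝ) :
    ∫ x, g x ∂μ = ∫ p, g ((p.2 : ℝ) • (p.1 : E))
      ∂μ.toSphere.prod (.volumeIoiPow (Module.finrank ℝ E - 1)) := by
  conv_lhs => rw [← restrict_compl_singleton (μ := μ) 0,
    ← integral_subtype_comap (measurableSet_singleton _).compl]
  rw [← μ.measurePreserving_homeomorphUnitSphereProd.integral_comp
    (Homeomorph.measurableEmbedding _)]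
  simp only [homeomorphUnitSphereProd_smul]

theorem integrable_iff_integrable_toSphere_prod (g : E → ℝ) :
    Integrable g μ ↔ Integrable (fun p ↦ g ((p.2 : ℝ) • (p.1 : E)))
      (μ.toSphere.prod (.volumeIoiPow (Module.finrank ℝ E - 1))) := by
  conv_lhs => rw [← restrict_compl_singleton (μ := μ) 0, ← IntegrableOn,
    integrableOn_iff_comap_subtypeVal (measurableSet_singleton _).compl]
  rw [← μ.measurePreserving_homeomorphUnitSphereProd.integrable_comp_emb
    (Homeomorph.measurableEmbedding _)]
  simp only [comp_def, homeomorphUnitSphereProd_smul]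

theorem integral_eq_integral_Ioi_integral_toSphere {g : E → ℝ} (hg : Integrable g μ) :
    ∫ x, g x ∂μ =
      ∫ r in Ioi 0, r ^ (Module.finrank ℝ E - 1) * ∫ σ, g (r • (σ : E)) ∂μ.toSphere := by
  rw [integral_eq_integral_toSphere_prod, integral_prod_symm _
    ((integrable_iff_integrable_toSphere_prod μ g).1 hg),
    integral_volumeIoiPow _ fun r ↦ ∫ σ, g (r • (σ : E)) ∂μ.toSphere]

theorem integrableOn_Ioi_integral_toSphere {g : E → ℝ} (hg : Integrable g μ) :
    IntegrableOn
      (fun r ↦ r ^ (Module.finrank ℝ E - 1) * ∫ σ, g (r • (σ : E)) ∂μ.toSphere) (Ioi 0) :=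
  (integrable_volumeIoiPow_iff _ _).1
    ((integrable_iff_integrable_toSphere_prod μ g).1 hg).integral_prod_right

end PolarCoordinates

theorem hasDerivAt_integral_of_continuous {X : Type*} [TopologicalSpace X] [CompactSpace X]
    [MeasurableSpace X] [OpensMeasurableSpace X] {ν : Measure X} [IsFiniteMeasure ν]
    {φ φ' : ℝ → X → ℝ} (hφ : Continuous (uncurry φ)) (hφ' : Continuous (uncurry φ'))
    (hderiv : ∀ t σ, HasDerivAt (φ · σ) (φ' t σ) t) (t₀ : ℝ) :
    HasDerivAt (fun t ↦ ∫ σ, φ t σ ∂ν) (∫ σ, φ' t₀ σ ∂ν) t₀ := by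
  obtain ⟨C, hC⟩ := ((isCompact_closedBall t₀ 1).prod isCompact_univ).exists_bound_of_continuousOn
    hφ'.continuousOn
  have hslice : ∀ {ψ : ℝ → X → ℝ}, Continuous (uncurry ψ) → ∀ t, Continuous (ψ t) :=
    fun h t ↦ h.comp (Continuous.prodMk_right t)
  refine (hasDerivAt_integral_of_dominated_loc_of_deriv_le (bound := fun _ ↦ C)
    (ball_mem_nhds t₀ one_pos) (.of_forall fun t ↦ (hslice hφ t).aestronglyMeasurable)
    ((hslice hφ t₀).integrable_of_hasCompactSupport (.of_compactSpace _))
    (hslice hφ' t₀).aestronglyMeasurable ?_ (integrable_const C)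
    (ae_of_all _ fun σ t _ ↦ hderiv t σ)).2
  exact ae_of_all _ fun σ t ht ↦ hC (t, σ) ⟨ball_subset_closedBall ht, mem_univ σ⟩

section SphericalIntegrals

variable {E : Type*} [NormedAddCommGroup E] [NormedSpace ℝ E] {f : E → ℝ}

theorem hasDerivAt_comp_smul {t : ℝ} {v : E} (hf : DifferentiableAt ℝ f (t • v)) :
    HasDerivAt (fun s : ℝ ↦ f (s • v)) (fderiv ℝ f (t • v) v) t := by
  have hline := (hasDerivAt_id t).smul_const v
  rw [one_smul] at hline
  exact hf.hasFDerivAt.comp_hasDerivAt t hline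

theorem hasDerivAt_integral_sq_comp_smul [FiniteDimensional ℝ E] [MeasurableSpace E]
    [BorelSpace E] {ν : Measure (sphere (0 : E) 1)} [IsFiniteMeasure ν] (hf : ContDiff ℝ 1 f)
    (r : ℝ) :
    HasDerivAt (fun t ↦ ∫ σ, f (t • (σ : E)) ^ 2 ∂ν)
      (2 * ∫ σ, f (r • (σ : E)) * fderiv ℝ f (r • (σ : E)) σ ∂ν) r := by
  have hfd : Continuous (fderiv ℝ f) := hf.continuous_fderiv one_ne_zero
  have hfc : Continuous f := hf.continuous
  have hφ : Continuous fun p : ℝ × sphere (0 : E) 1 ↦ f (p.1 • (p.2 : E)) ^ 2 := by fun_prop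
  have hφ' : Continuous fun p : ℝ × sphere (0 : E) 1 ↦
      2 * (f (p.1 • (p.2 : E)) * fderiv ℝ f (p.1 • (p.2 : E)) p.2) := by fun_prop
  rw [← integral_const_mul]
  refine hasDerivAt_integral_of_continuous
    (φ := fun t (σ : sphere (0 : E) 1) ↦ f (t • (σ : E)) ^ 2)
    (φ' := fun t σ ↦ 2 * (f (t • (σ : E)) * fderiv ℝ f (t • (σ : E)) σ)) hφ hφ' (fun t σ ↦ ?_) r
  refine ((hasDerivAt_comp_smul (hf.differentiable one_ne_zero _)).pow 2).congr_deriv ?_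
  simp only [Nat.cast_ofNat, Nat.add_one_sub_one, pow_one]
  ring

end SphericalIntegrals

end MeasureTheory

section RadialDerivative

variable {N : ℕ} {f : EuclideanSpace ℝ (Fin N) → ℝ}

local notation "E" => EuclideanSpace ℝ (Fin N)

theorem radDeriv_smul_of_mem_sphere {r : ℝ} (hr : 0 < r) (σ : sphere (0 : E) 1) :
    radDeriv f (r • (σ : E)) = fderiv ℝ f (r • (σ : E)) σ := by
  rw [radDeriv, norm_smul_of_norm_eq_one hr.le (norm_eq_of_mem_sphere σ), smul_smul,
    inv_mul_cancel₀ hr.ne', one_smul]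

theorem radDeriv_norm_rpow_mul (a : ℝ) {x : E} (hf : DifferentiableAt ℝ f x) (hx : x ≠ 0) :
    radDeriv (fun y ↦ ‖y‖ ^ a * f y) x = ‖x‖ ^ a * (radDeriv f x + a * ‖x‖⁻¹ * f x) := by
  have hr : 0 < ‖x‖ := norm_pos_iff.2 hx
  set σ := ‖x‖⁻¹ • x
  have hσ : ‖σ‖ = 1 := by rw [norm_smul, norm_inv, norm_norm, inv_mul_cancel₀ hr.ne']
  have hxσ : ‖x‖ • σ = x := smul_inv_smul₀ hr.ne' x
  have hg : DifferentiableAt ℝ (fun y ↦ ‖y‖ ^ a * f y) (‖x‖ • σ) := by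
    rw [hxσ]
    exact (((contDiffAt_norm ℝ hx).differentiableAt one_ne_zero).rpow_const
      (Or.inl hr.ne')).mul hf
  have hray : (fun t : ℝ ↦ ‖t • σ‖ ^ a * f (t • σ)) =ᶠ[𝓝 ‖x‖] fun t ↦ t ^ a * f (t • σ) := by
    filter_upwards [Ioi_mem_nhds hr] with t ht
    rw [norm_smul_of_norm_eq_one ht.le hσ]
  have hf' : DifferentiableAt ℝ f (‖x‖ • σ) := by rwa [hxσ]
  have hderiv := ((Real.hasDerivAt_rpow_const (Or.inl hr.ne')).mul
    (hasDerivAt_comp_smul hf')).congr_of_eventuallyEq hray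
  have hunique := (hasDerivAt_comp_smul hg).unique hderiv
  rw [hxσ] at hunique
  change fderiv ℝ _ x σ = ‖x‖ ^ a * (fderiv ℝ f x σ + _)
  rw [hunique, Real.rpow_sub_one hr.ne']
  ring

theorem sq_radDeriv_norm_rpow_neg_mul (ν : ℕ) {x : E} (hf : DifferentiableAt ℝ f x)
    (hx : x ≠ 0) :
    radDeriv (fun y ↦ ‖y‖ ^ (-(ν : ℝ)) * f y) x ^ 2 * ‖x‖ ^ (2 * ν) =
      (radDeriv f x - ν * ‖x‖⁻¹ * f x) ^ 2 := by
  have hr : ‖x‖ ≠ 0 := norm_ne_zero_iff.2 hx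
  rw [radDeriv_norm_rpow_mul _ hf hx, Real.rpow_neg (norm_nonneg x), Real.rpow_natCast,
    pow_mul']
  field_simp
  ring

theorem measurable_radDeriv (hf : ContDiff ℝ 1 f) : Measurable (radDeriv f) := by
  have hfd : Continuous (fderiv ℝ f) := hf.continuous_fderiv one_ne_zero
  unfold radDeriv
  fun_prop

theorem integrable_mul_radDeriv_div_norm (hf : ContDiff ℝ 1 f)
    (hD : Integrable fun x ↦ radDeriv f x ^ 2)
    (hB : Integrable fun x : E ↦ (‖x‖ ^ 2)⁻¹ * f x ^ 2) :
    Integrable fun x ↦ f x * radDeriv f x * ‖x‖⁻¹ := by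
  have hmeas : Measurable fun x ↦ f x * radDeriv f x * ‖x‖⁻¹ :=
    (hf.continuous.measurable.mul (measurable_radDeriv hf)).mul measurable_norm.inv
  refine ((hD.add hB).div_const 2).mono' hmeas.aestronglyMeasurable (ae_of_all _ fun x ↦ ?_)
  rw [Pi.add_apply, Real.norm_eq_abs, abs_le, ← inv_pow]
  constructor <;> nlinarith [sq_nonneg (radDeriv f x + f x * ‖x‖⁻¹),
    sq_nonneg (radDeriv f x - f x * ‖x‖⁻¹)]

instance : IsFiniteMeasure (sphereMeasure N) :=
  inferInstanceAs (IsFiniteMeasure (volume : Measure E).toSphere)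

theorem pow_mul_integral_sphere_inv_norm_sq_mul_sq (hN : 3 ≤ N) {r : ℝ} (hr : 0 < r) :
    r ^ (N - 1) * ∫ σ, (‖r • (σ : E)‖ ^ 2)⁻¹ * f (r • (σ : E)) ^ 2 ∂sphereMeasure N =
      r ^ (N - 3) * ∫ σ, f (r • (σ : E)) ^ 2 ∂sphereMeasure N := by
  simp only [fun σ : sphere (0 : E) 1 ↦ norm_smul_of_norm_eq_one hr.le (norm_eq_of_mem_sphere σ)]
  rw [integral_const_mul, show N - 1 = N - 3 + 2 by omega, pow_add]
  field_simp

theorem pow_mul_integral_sphere_mul_radDeriv_div_norm (hN : 2 ≤ N) {r : ℝ} (hr : 0 < r) :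
    r ^ (N - 1) * ∫ σ, f (r • (σ : E)) * radDeriv f (r • (σ : E)) * ‖r • (σ : E)‖⁻¹
        ∂sphereMeasure N =
      r ^ (N - 2) * ∫ σ, f (r • (σ : E)) * fderiv ℝ f (r • (σ : E)) σ ∂sphereMeasure N := by
  simp only [fun σ : sphere (0 : E) 1 ↦ norm_smul_of_norm_eq_one hr.le (norm_eq_of_mem_sphere σ),
    radDeriv_smul_of_mem_sphere hr]
  rw [integral_mul_const, show N - 1 = N - 2 + 1 by omega, pow_succ]
  field_simp

theorem two_mul_integral_mul_radDeriv_div_norm (hN : 3 ≤ N) (hf : ContDiff ℝ 1 f)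
    (hlim : Tendsto (fun R : ℝ ↦ R ^ (N - 2) * ∫ σ, f (R • (σ : E)) ^ 2 ∂sphereMeasure N)
      atTop (𝓝 0))
    (hA : Integrable fun x : E ↦ f x * radDeriv f x * ‖x‖⁻¹)
    (hB : Integrable fun x : E ↦ (‖x‖ ^ 2)⁻¹ * f x ^ 2) :
    2 * ∫ x, f x * radDeriv f x * ‖x‖⁻¹ = -((N : ℝ) - 2) * ∫ x, (‖x‖ ^ 2)⁻¹ * f x ^ 2 := by
  have : Nonempty (Fin N) := ⟨⟨0, by omega⟩⟩
  have hdim : Module.finrank ℝ E - 1 = N - 1 := by rw [finrank_euclideanSpace_fin]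
  set F := fun r : ℝ ↦ ∫ σ, f (r • (σ : E)) ^ 2 ∂sphereMeasure N
  set G := fun r : ℝ ↦ ∫ σ, f (r • (σ : E)) * fderiv ℝ f (r • (σ : E)) σ ∂sphereMeasure N
  have hBpolar := integral_eq_integral_Ioi_integral_toSphere volume hB
  have hApolar := integral_eq_integral_Ioi_integral_toSphere volume hA
  have hBint := integrableOn_Ioi_integral_toSphere volume hB
  have hAint := integrableOn_Ioi_integral_toSphere volume hA
  rw [hdim] at hBpolar hApolar hBint hAint
  have hBsphere := fun r (hr : (0 : ℝ) < r) ↦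
    pow_mul_integral_sphere_inv_norm_sq_mul_sq (f := f) hN hr
  have hAsphere := fun r (hr : (0 : ℝ) < r) ↦
    pow_mul_integral_sphere_mul_radDeriv_div_norm (f := f) (by omega) hr
  have hBradial : IntegrableOn (fun r ↦ r ^ (N - 3) * F r) (Ioi 0) :=
    hBint.congr_fun hBsphere measurableSet_Ioi
  have hAradial : IntegrableOn (fun r ↦ r ^ (N - 2) * G r) (Ioi 0) :=
    hAint.congr_fun hAsphere measurableSet_Ioi
  have hF : ∀ r, HasDerivAt F (2 * G r) r := hasDerivAt_integral_sq_comp_smul hf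
  have hderiv : ∀ r ∈ Ioi (0 : ℝ), HasDerivAt (fun r ↦ r ^ (N - 2) * F r)
      (((N : ℝ) - 2) * (r ^ (N - 3) * F r) + 2 * (r ^ (N - 2) * G r)) r := by
    intro r _
    refine ((hasDerivAt_pow (N - 2) r).mul (hF r)).congr_deriv ?_
    rw [show N - 2 - 1 = N - 3 by omega, Nat.cast_sub (by omega : 2 ≤ N)]
    push_cast
    ring
  have hcont : ContinuousWithinAt (fun r ↦ r ^ (N - 2) * F r) (Ici 0) 0 :=
    ((continuous_pow _).continuousAt.mul (hF 0).continuousAt).continuousWithinAt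
  have hFTC := integral_Ioi_of_hasDerivAt_of_tendsto hcont hderiv
    ((hBradial.const_mul _).add (hAradial.const_mul _)) hlim
  rw [integral_add (hBradial.const_mul _) (hAradial.const_mul _), integral_const_mul,
    integral_const_mul, zero_pow (by omega), zero_mul, sub_zero] at hFTC
  rw [hBpolar.trans (setIntegral_congr_fun measurableSet_Ioi hBsphere),
    hApolar.trans (setIntegral_congr_fun measurableSet_Ioi hAsphere)]
  linarith

end RadialDerivative

theorem stmt_8_general (N ν : ℕ) (hN : 3 ≤ N)
    (f : EuclideanSpace ℝ (Fin N) → ℝ)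
    (hf : ContDiff ℝ (⊤ : ℕ∞) f)
    (hlim : Tendsto
      (fun R : ℝ => R ^ (N - 2) *
        ∫ σ : sphere (0 : EuclideanSpace ℝ (Fin N)) 1,
          (f (R • (σ : EuclideanSpace ℝ (Fin N)))) ^ 2 ∂(sphereMeasure N))
      atTop (nhds 0))
    (hI1 : Integrable (fun x => (radDeriv f x) ^ 2) volume)
    (hI2 : Integrable (fun x => (‖x‖ ^ 2)⁻¹ * (f x) ^ 2) volume) :
    (∫ x, (radDeriv (fun y => ‖y‖ ^ (-(ν : ℝ)) * f y) x) ^ 2 * ‖x‖ ^ (2 * ν)) =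
      ∫ x, ((radDeriv f x) ^ 2 +
        (ν : ℝ) * ((ν : ℝ) + (N : ℝ) - 2) * (‖x‖ ^ 2)⁻¹ * (f x) ^ 2) := by
  have : Nonempty (Fin N) := ⟨⟨0, by omega⟩⟩
  have hf1 : ContDiff ℝ 1 f := hf.of_le (by exact_mod_cast le_top)
  have hA := integrable_mul_radDeriv_div_norm hf1 hI1 hI2
  have hkey := two_mul_integral_mul_radDeriv_div_norm hN hf1 hlim hA hI2
  have hexpand : ∀ x, x ≠ 0 →
      radDeriv (fun y ↦ ‖y‖ ^ (-(ν : ℝ)) * f y) x ^ 2 * ‖x‖ ^ (2 * ν) =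
        radDeriv f x ^ 2 - 2 * ν * (f x * radDeriv f x * ‖x‖⁻¹) +
          ν ^ 2 * ((‖x‖ ^ 2)⁻¹ * f x ^ 2) := fun x hx ↦ by
    rw [sq_radDeriv_norm_rpow_neg_mul ν (hf1.differentiable one_ne_zero x) hx]
    ring
  calc _ = ∫ x, (radDeriv f x ^ 2 - 2 * ν * (f x * radDeriv f x * ‖x‖⁻¹) +
          ν ^ 2 * ((‖x‖ ^ 2)⁻¹ * f x ^ 2)) :=
        integral_congr_ae ((Measure.ae_ne volume 0).mono hexpand)
    _ = (∫ x, radDeriv f x ^ 2) - 2 * ν * (∫ x, f x * radDeriv f x * ‖x‖⁻¹) +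
          ν ^ 2 * ∫ x, (‖x‖ ^ 2)⁻¹ * f x ^ 2 := by
      rw [integral_add (hI1.sub' (hA.const_mul _)) (hI2.const_mul _),
        integral_sub hI1 (hA.const_mul _), integral_const_mul, integral_const_mul]
    _ = (∫ x, radDeriv f x ^ 2) + ν * (ν + N - 2) * ∫ x, (‖x‖ ^ 2)⁻¹ * f x ^ 2 := by
      linear_combination (-(ν : ℝ)) * hkey
    _ = _ := by
      rw [← integral_const_mul, ← integral_add hI1 (hI2.const_mul _)]
      simp only [mul_assoc]

/-- Integral identity for the transformation `f ↦ |x|^{-ν} f`: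
`∫ (∂_r(|x|^{-ν}f))² |x|^{2ν} dx = ∫ ((∂_r f)² + ν(ν+N-2)|x|^{-2} f²) dx`. -/
theorem stmt_8 (N ν : ℕ) (hN : 3 ≤ N) (hν : 1 ≤ ν)
    (f : EuclideanSpace ℝ (Fin N) → ℝ)
    (hf : ContDiff ℝ (⊤ : ℕ∞) f)
    (hlim : Tendsto
      (fun R : ℝ => R ^ (N - 2) *
        ∫ σ : sphere (0 : EuclideanSpace ℝ (Fin N)) 1,
          (f (R • (σ : EuclideanSpace ℝ (Fin N)))) ^ 2 ∂(sphereMeasure N))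
      atTop (nhds 0))
    (hI1 : Integrable (fun x => (radDeriv f x) ^ 2) volume)
    (hI2 : Integrable (fun x => (‖x‖ ^ 2)⁻¹ * (f x) ^ 2) volume) :
    (∫ x, (radDeriv (fun y => ‖y‖ ^ (-(ν : ℝ)) * f y) x) ^ 2 * ‖x‖ ^ (2 * ν)) =
      ∫ x, ((radDeriv f x) ^ 2 +
        (ν : ℝ) * ((ν : ℝ) + (N : ℝ) - 2) * (‖x‖ ^ 2)⁻¹ * (f x) ^ 2) :=
  stmt_8_general N ν hN f hf hlim hI1 hI2
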